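/- arXiv:quant-ph/9805080 — 2 statements merged into one kernel-verified Lean document; each statement's English description precedes it below -/
import Mathlib

section
/- For every ε > 0 and δ > 0 there exists N₀ such that for all N ≥ N₀, the real part of trace(ρ⊗N * Π) is at least 1 − ε, where Π is the orthogonal projector onto the typical subspace spanned by those tensor products of eigenvectors whose total codeword length is at most N(L̄ + δ); precisely, with M_N : Matrix (Fin N → Fin d) (Fin N → Fin d) ℂ given by M_N x y = ∏ j, ρ (x j) (y j) and Π a b = ∑ over x : Fin N → Fin d with (∑ j, (l (x j) : ℝ)) ≤ N * (L̄ + δ) of ∏ j, (v (x j) (a j)) * conj (v (x j) (b j)), one has (trace (M_N * Π)).re ≥ 1 − ε. -/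
/-!
In the eigenbasis of `ρ` everything is classical: the `N`-fold tensor power is diagonal on the
product eigenvectors with weights `∏ j, p (x j)`, so the fidelity with the typical projector is
the probability, under the i.i.d. distribution `p^⊗N`, that the total codeword length is at most
`N (L̄ + δ)`. By Chebyshev's inequality the complementary event has probability at most
`Var / (N δ²)`, which is the weak law of large numbers for the codeword length.
-/

open scoped ComplexConjugate ComplexOrder
open Finset Matrix

section Spectral

variable {ι κ : Type*} [Fintype ι] [Fintype κ] [DecidableEq κ]
  {ρ : Matrix ι ι ℂ} {p : κ → ℝ} {v : κ → ι → ℂ}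

theorem mulVec_eigenvector
    (hortho : ∀ i i' : κ, ∑ a, v i a * conj (v i' a) = if i = i' then 1 else 0)
    (hdiag : ∀ a b : ι, ρ a b = ∑ i, (p i : ℂ) * v i a * conj (v i b)) (k : κ) :
    ρ *ᵥ v k = (p k : ℂ) • v k := by
  ext a
  calc (ρ *ᵥ v k) a = ∑ i, (p i : ℂ) * v i a * ∑ b, v k b * conj (v i b) := by
        simp only [mulVec, dotProduct, hdiag, sum_mul, mul_sum]
        rw [sum_comm]
        exact sum_congr rfl fun _ _ => sum_congr rfl fun _ _ => by ring
    _ = ((p k : ℂ) • v k) a := by simp [hortho]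

theorem star_dotProduct_mulVec_eigenvector
    (hortho : ∀ i i' : κ, ∑ a, v i a * conj (v i' a) = if i = i' then 1 else 0)
    (hdiag : ∀ a b : ι, ρ a b = ∑ i, (p i : ℂ) * v i a * conj (v i b)) (k : κ) :
    star (v k) ⬝ᵥ ρ *ᵥ v k = p k := by
  rw [mulVec_eigenvector hortho hdiag, dotProduct_smul, dotProduct_comm]
  simp [dotProduct, hortho k k]

theorem eigenvalue_nonneg (hρ : ρ.PosSemidef)
    (hortho : ∀ i i' : κ, ∑ a, v i a * conj (v i' a) = if i = i' then 1 else 0)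
    (hdiag : ∀ a b : ι, ρ a b = ∑ i, (p i : ℂ) * v i a * conj (v i b)) (k : κ) :
    0 ≤ p k := by
  have h := hρ.dotProduct_mulVec_nonneg (v k)
  rwa [star_dotProduct_mulVec_eigenvector hortho hdiag, Complex.zero_le_real] at h

theorem sum_eigenvalues_eq_trace
    (hortho : ∀ i i' : κ, ∑ a, v i a * conj (v i' a) = if i = i' then 1 else 0)
    (hdiag : ∀ a b : ι, ρ a b = ∑ i, (p i : ℂ) * v i a * conj (v i b)) :
    ((∑ i, p i : ℝ) : ℂ) = ρ.trace := by
  simp only [trace, Matrix.diag, hdiag, mul_assoc]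
  rw [sum_comm]
  simp [← mul_sum, hortho]

end Spectral

section TensorPower

variable {σ ι R : Type*} [Fintype σ] [DecidableEq σ] [Fintype ι] [CommSemiring R]

theorem dotProduct_prod_apply (u w : σ → ι → R) :
    (fun a : σ → ι => ∏ j, u j (a j)) ⬝ᵥ (fun a => ∏ j, w j (a j)) = ∏ j, u j ⬝ᵥ w j := by
  simp only [dotProduct, ← prod_mul_distrib]
  exact (Fintype.prod_sum fun j i => u j i * w j i).symm

theorem of_prod_apply_mulVec_prod_apply (A : σ → Matrix ι ι R) (u : σ → ι → R) :
    (of fun a b : σ → ι => ∏ j, A j (a j) (b j)) *ᵥ (fun b => ∏ j, u j (b j)) =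
      fun a => ∏ j, (A j *ᵥ u j) (a j) := by
  ext a
  exact dotProduct_prod_apply (fun j => A j (a j)) u

theorem trace_of_prod_apply_mul_sum_prod_vecMulVec {κ : Type*} (ρ : Matrix ι ι ℂ)
    (v : κ → ι → ℂ) (T : Finset (σ → κ)) :
    trace ((of fun a b : σ → ι => ∏ j, ρ (a j) (b j)) *
        of fun a b => ∑ x ∈ T, ∏ j, v (x j) (a j) * conj (v (x j) (b j))) =
      ∑ x ∈ T, ∏ j, star (v (x j)) ⬝ᵥ ρ *ᵥ v (x j) := by
  have hproj : (of fun a b : σ → ι => ∑ x ∈ T, ∏ j, v (x j) (a j) * conj (v (x j) (b j))) =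
      ∑ x ∈ T, vecMulVec (fun a => ∏ j, v (x j) (a j)) (fun b => ∏ j, star (v (x j)) (b j)) := by
    ext a b
    simp [vecMulVec_apply, Matrix.sum_apply, prod_mul_distrib]
  rw [hproj, mul_sum, trace_sum]
  refine sum_congr rfl fun x _ => ?_
  rw [mul_vecMulVec, trace_vecMulVec, of_prod_apply_mulVec_prod_apply (fun _ => ρ),
    dotProduct_comm, dotProduct_prod_apply]

end TensorPower

section ProductWeights

variable {σ ι R : Type*} [Fintype σ] [DecidableEq σ] [Fintype ι] [CommRing R] {p : ι → R}

theorem sum_prod_apply_eq_one (hp : ∑ i, p i = 1) : ∑ x : σ → ι, ∏ m, p (x m) = 1 := by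
  rw [← Fintype.prod_sum fun _ i => p i, hp, prod_const_one]

theorem sum_prod_mul_apply_mul_apply (hp : ∑ i, p i = 1) (f g : ι → R) (j k : σ) :
    ∑ x : σ → ι, (∏ m, p (x m)) * (f (x j) * g (x k)) =
      if j = k then ∑ i, p i * (f i * g i) else (∑ i, p i * f i) * ∑ i, p i * g i := by
  have hterm : ∀ x : σ → ι, (∏ m, p (x m)) * (f (x j) * g (x k)) =
      ∏ m, p (x m) * (if m = j then f (x m) else 1) * (if m = k then g (x m) else 1) := by
    intro x
    rw [prod_mul_distrib, prod_mul_distrib, prod_ite_eq' univ j, prod_ite_eq' univ k]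
    simp [mul_assoc]
  simp only [hterm]
  rw [← Fintype.prod_sum (fun m i => p i * (if m = j then f i else 1) * (if m = k then g i else 1))]
  split_ifs with hjk
  · subst hjk
    rw [prod_eq_single j (fun m _ hm => by simp [hm, hp]) (by simp)]
    simp [mul_assoc]
  · have hfactor : ∀ m, ∑ i, p i * (if m = j then f i else 1) * (if m = k then g i else 1) =
        (if m = j then ∑ i, p i * f i else 1) * (if m = k then ∑ i, p i * g i else 1) := by
      intro m
      by_cases hmj : m = j <;> by_cases hmk : m = k <;> simp_all
    simp only [hfactor, prod_mul_distrib, prod_ite_eq', mem_univ, if_true]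

theorem sum_prod_mul_sum_sq (hp : ∑ i, p i = 1) {g : ι → R} (hg : ∑ i, p i * g i = 0) :
    ∑ x : σ → ι, (∏ m, p (x m)) * (∑ j, g (x j)) ^ 2 =
      Fintype.card σ * ∑ i, p i * g i ^ 2 := by
  calc ∑ x : σ → ι, (∏ m, p (x m)) * (∑ j, g (x j)) ^ 2
      = ∑ j, ∑ k, ∑ x : σ → ι, (∏ m, p (x m)) * (g (x j) * g (x k)) := by
        simp_rw [sq, sum_mul_sum, mul_sum]
        rw [sum_comm]
        exact sum_congr rfl fun _ _ => sum_comm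
    _ = Fintype.card σ * ∑ i, p i * g i ^ 2 := by
        simp [sum_prod_mul_apply_mul_apply hp, hg, sq]

end ProductWeights

theorem Finset.sum_filter_mul_sq_le {α : Type*} {s : Finset α} {w Y : α → ℝ}
    (hw : ∀ x ∈ s, 0 ≤ w x) {t : ℝ} (ht : 0 ≤ t) :
    (∑ x ∈ s with t ≤ Y x, w x) * t ^ 2 ≤ ∑ x ∈ s, w x * Y x ^ 2 := by
  rw [sum_mul, sum_filter]
  refine sum_le_sum fun x hx => ?_
  split_ifs with htY
  · exact mul_le_mul_of_nonneg_left (pow_le_pow_left₀ ht htY 2) (hw x hx)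
  · simpa using mul_nonneg (hw x hx) (sq_nonneg (Y x))

section WeakLaw

variable {σ ι : Type*} [Fintype σ] [DecidableEq σ] [Fintype ι] {p : ι → ℝ}

theorem one_sub_div_le_sum_prod_filter [Nonempty σ] (hp0 : ∀ i, 0 ≤ p i) (hp1 : ∑ i, p i = 1)
    (f : ι → ℝ) {δ : ℝ} (hδ : 0 < δ) :
    1 - (∑ i, p i * (f i - ∑ i', p i' * f i') ^ 2) / (Fintype.card σ * δ ^ 2) ≤
      ∑ x : σ → ι with ∑ j, f (x j) ≤ Fintype.card σ * (∑ i, p i * f i + δ), ∏ j, p (x j) := by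
  set μ := ∑ i, p i * f i
  set n : ℝ := (Fintype.card σ : ℝ)
  have hn : 0 < n := by simp [n, Fintype.card_pos]
  have hw : ∀ x : σ → ι, 0 ≤ ∏ j, p (x j) := fun x => prod_nonneg fun j _ => hp0 (x j)
  have hcentered : ∑ i, p i * (f i - μ) = 0 := by
    simp only [mul_sub, sum_sub_distrib, ← sum_mul, hp1, one_mul, sub_self, μ]
  have hsplit := sum_filter_add_sum_filter_not univ
    (fun x : σ → ι => ∑ j, f (x j) ≤ n * (μ + δ)) fun x => ∏ j, p (x j)
  rw [sum_prod_apply_eq_one hp1] at hsplit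
  have hatypical : ∑ x : σ → ι with ¬ ∑ j, f (x j) ≤ n * (μ + δ), ∏ j, p (x j) ≤
      ∑ x : σ → ι with n * δ ≤ ∑ j, (f (x j) - μ), ∏ j, p (x j) := by
    refine sum_le_sum_of_subset_of_nonneg (monotone_filter_right _ fun x _ hx => ?_)
      fun x _ _ => hw x
    simp only [sum_sub_distrib, sum_const, card_univ, nsmul_eq_mul]
    linarith [not_le.mp hx]
  have hchebyshev := sum_filter_mul_sq_le (s := univ) (fun x _ => hw x) (t := n * δ)
    (Y := fun x => ∑ j, (f (x j) - μ)) (by positivity)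
  rw [sum_prod_mul_sum_sq hp1 hcentered] at hchebyshev
  have hbound : ∑ x : σ → ι with n * δ ≤ ∑ j, (f (x j) - μ), ∏ j, p (x j) ≤
      (∑ i, p i * (f i - μ) ^ 2) / (n * δ ^ 2) := by
    rw [le_div_iff₀ (by positivity)]
    nlinarith
  linarith

theorem exists_forall_le_sum_prod_filter (hp0 : ∀ i, 0 ≤ p i) (hp1 : ∑ i, p i = 1)
    (f : ι → ℝ) {ε δ : ℝ} (hε : 0 < ε) (hδ : 0 < δ) :
    ∃ N₀ : ℕ, ∀ N : ℕ, N₀ ≤ N →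
      1 - ε ≤ ∑ x ∈ univ.filter (fun x : Fin N → ι => ∑ j, f (x j) ≤ N * (∑ i, p i * f i + δ)),
        ∏ j, p (x j) := by
  set V := ∑ i, p i * (f i - ∑ i', p i' * f i') ^ 2
  refine ⟨⌈V / (ε * δ ^ 2)⌉₊ + 1, fun N hN => ?_⟩
  have : Nonempty (Fin N) := ⟨⟨0, by omega⟩⟩
  have hV : V / (N * δ ^ 2) ≤ ε := by
    have hceil : V / (ε * δ ^ 2) ≤ N :=
      (Nat.le_ceil _).trans (by exact_mod_cast (show ⌈V / (ε * δ ^ 2)⌉₊ ≤ N by omega))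
    have hNpos : (0 : ℝ) < N := by exact_mod_cast Fin.pos'
    rw [div_le_iff₀ (by positivity)] at hceil
    rw [div_le_iff₀ (by positivity)]
    linarith
  have hlaw := one_sub_div_le_sum_prod_filter (σ := Fin N) hp0 hp1 f hδ
  rw [Fintype.card_fin] at hlaw
  linarith

end WeakLaw

/-- Proposition 1 of the paper: Let `ρ` be a `d × d` density matrix with
eigenvalues `p` and orthonormal eigenvectors `v`, and let `l` assign codeword lengths to
the eigenstates, with average length `L̄ = ∑ i, p i * l i`.  For every `ε > 0` and `δ > 0`
there exists `N₀` such that for all `N ≥ N₀`, the real part of `trace (ρ^⊗N * Π)` is at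
least `1 - ε`, where `Π` projects onto the typical subspace spanned by tensor products of
eigenvectors whose total codeword length is at most `N * (L̄ + δ)`. -/
theorem quantum_huffman_typical_subspace_fidelity (d : ℕ)
    (ρ : Matrix (Fin d) (Fin d) ℂ) (hρ : ρ.PosSemidef) (htr : ρ.trace = 1)
    (p : Fin d → ℝ) (v : Fin d → Fin d → ℂ)
    (hortho : ∀ i i' : Fin d, ∑ a, v i a * conj (v i' a) = if i = i' then 1 else 0)
    (hdiag : ∀ a b : Fin d, ρ a b = ∑ i, (p i : ℂ) * v i a * conj (v i b))
    (l : Fin d → ℕ) (ε δ : ℝ) (hε : 0 < ε) (hδ : 0 < δ) :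
    ∃ N₀ : ℕ, ∀ N : ℕ, N₀ ≤ N →
      1 - ε ≤
        (Matrix.trace
          ((Matrix.of fun x y : Fin N → Fin d => ∏ j, ρ (x j) (y j)) *
           (Matrix.of fun a b : Fin N → Fin d =>
              ∑ x ∈ Finset.univ.filter (fun x : Fin N → Fin d =>
                  (∑ j, (l (x j) : ℝ)) ≤ N * ((∑ i, p i * (l i : ℝ)) + δ)),
                ∏ j, v (x j) (a j) * conj (v (x j) (b j))))).re := by
  obtain ⟨N₀, hN₀⟩ := exists_forall_le_sum_prod_filter (eigenvalue_nonneg hρ hortho hdiag)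
    (by exact_mod_cast (sum_eigenvalues_eq_trace hortho hdiag).trans htr) (fun i => (l i : ℝ)) hε hδ
  refine ⟨N₀, fun N hN => ?_⟩
  rw [trace_of_prod_apply_mul_sum_prod_vecMulVec]
  simp only [star_dotProduct_mulVec_eigenvector hortho hdiag]
  exact_mod_cast hN₀ N hN
end

section
/- Let a b : ℂ with ‖a‖^2 + ‖b‖^2 = 1, and let m : ℕ. For x : Fin (m+1) → Bool let z x denote the number of indices j with x j = false, and define the entangled encoder-plus-record state ψ : (Fin (m+1) → Bool) → Fin (m+2) → ℂ by ψ x k = if (k : ℕ) = z x then a ^ (z x) * b ^ (m + 1 − z x) else 0. Define the reduced density matrix of the first signal ρ₁ : Bool → Bool → ℂ by ρ₁ i j = ∑ over g : Fin m → Bool and k : Fin (m+2) of ψ (Fin.cons i g) k * conj (ψ (Fin.cons j g) k). Then ρ₁ false false = ‖a‖^2, ρ₁ true true = ‖b‖^2, ρ₁ false true = 0 and ρ₁ true false = 0; consequently the fidelity of the first signal with the input state a|0⟩ + b|1⟩, namely the real part of conj a * ρ₁ false false * a + conj a * ρ₁ false true * b + conj b * ρ₁ true false * a + conj b * ρ₁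 true true * b, equals ‖a‖^4 + ‖b‖^4, which is strictly less than 1 whenever a ≠ 0 and b ≠ 0. -/
open scoped ComplexConjugate

/-- The number of indices `j` with `x j = false` (the number of zeroes of the record). -/
def numZeroes {m : ℕ} (x : Fin (m + 1) → Bool) : ℕ :=
  (Finset.univ.filter fun j => x j = false).card

/-- The entangled encoder-plus-record state for `m + 1` copies of `a|0⟩ + b|1⟩`, where the
encoder head records the total number of zeroes. -/
noncomputable def encoderState (a b : ℂ) (m : ℕ)
    (x : Fin (m + 1) → Bool) (k : Fin (m + 2)) : ℂ :=
  if (k : ℕ) = numZeroes x then a ^ numZeroes x * b ^ (m + 1 - numZeroes x) else 0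

/-- The reduced density matrix of the first signal, obtained by tracing out the remaining
`m` signals and the record register. -/
noncomputable def firstSignalState (a b : ℂ) (m : ℕ) (i j : Bool) : ℂ :=
  ∑ g : Fin m → Bool, ∑ k : Fin (m + 2),
    encoderState a b m (Fin.cons i g) k * conj (encoderState a b m (Fin.cons j g) k)

/-!
The record register is diagonal in the number of zeroes, and flipping the first signal changes
that number, so the off-diagonal entries of `ρ₁` vanish. On the diagonal, the amplitude
`a ^ z * b ^ (m + 1 - z)` is the product over the signals of their amplitudes `a` or `b`, so
tracing out the other `m` signals multiplies the first signal's weight `|a|²` or `|b|²` by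
`(|a|² + |b|²) ^ m = 1`. The fidelity is then `|a|⁴ + |b|⁴ < (|a|² + |b|²)² = 1`.
-/

open Finset

def zeroCount {n : ℕ} (x : Fin n → Bool) : ℕ :=
  #{j | x j = false}

theorem zeroCount_cons {n : ℕ} (i : Bool) (x : Fin n → Bool) :
    zeroCount (Fin.cons i x : Fin (n + 1) → Bool) = cond i 0 1 + zeroCount x := by
  simp only [zeroCount, card_filter, Fin.sum_univ_succ, Fin.cons_zero, Fin.cons_succ]
  cases i <;> rfl

theorem prod_cond_eq_pow_mul_pow {M : Type*} [CommMonoid M] {n : ℕ} (p q : M)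
    (x : Fin n → Bool) : ∏ j, cond (x j) q p = p ^ zeroCount x * q ^ (n - zeroCount x) := by
  have hcompl : #{j | ¬x j = false} = n - zeroCount x := by
    have := card_filter_add_card_filter_not (s := univ) fun j => x j = false
    rw [card_univ, Fintype.card_fin] at this
    exact Nat.eq_sub_of_add_eq' this
  rw [← hcompl, zeroCount, ← prod_const, ← prod_const, ← prod_ite]
  exact prod_congr rfl fun j _ => by cases x j <;> rfl

theorem encoderState_eq {a b : ℂ} {m : ℕ} (x : Fin (m + 1) → Bool) (k : Fin (m + 2)) :
    encoderState a b m x k = if (k : ℕ) = numZeroes x then ∏ j, cond (x j) b a else 0 := by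
  rw [encoderState, prod_cond_eq_pow_mul_pow]; rfl

theorem encoderState_mul_conj_eq_zero {a b : ℂ} {m : ℕ} {x y : Fin (m + 1) → Bool}
    (hxy : numZeroes x ≠ numZeroes y) (k : Fin (m + 2)) :
    encoderState a b m x k * conj (encoderState a b m y k) = 0 := by
  by_cases hx : (k : ℕ) = numZeroes x
  · have hy : encoderState a b m y k = 0 := if_neg fun hy => hxy (hx.symm.trans hy)
    rw [hy, map_zero, mul_zero]
  · have hx : encoderState a b m x k = 0 := if_neg hx
    rw [hx, zero_mul]

theorem sum_encoderState_mul_conj_self {a b : ℂ} {m : ℕ} (x : Fin (m + 1) → Bool) :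
    ∑ k, encoderState a b m x k * conj (encoderState a b m x k) =
      (Complex.normSq (∏ j, cond (x j) b a) : ℂ) := by
  have hz : numZeroes x < m + 2 := Nat.lt_succ_of_le (card_filter_le _ _ |>.trans_eq (by simp))
  rw [Fintype.sum_eq_single ⟨numZeroes x, hz⟩, Complex.mul_conj, encoderState_eq, if_pos rfl]
  intro k hk
  rw [encoderState_eq, if_neg (fun h => hk (Fin.ext h)), zero_mul]

theorem firstSignalState_diag (a b : ℂ) (m : ℕ) (i : Bool) :
    firstSignalState a b m i i =
      (Complex.normSq (cond i b a) * (Complex.normSq a + Complex.normSq b) ^ m : ℝ) := by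
  simp only [firstSignalState, sum_encoderState_mul_conj_self, Fin.prod_univ_succ, Fin.cons_zero,
    Fin.cons_succ, map_mul, map_prod, ← Complex.ofReal_sum, ← mul_sum]
  have hbool : Complex.normSq a + Complex.normSq b = ∑ i, Complex.normSq (cond i b a) := by
    simp [add_comm]
  rw [hbool, Fintype.sum_pow]

theorem firstSignalState_offDiag (a b : ℂ) (m : ℕ) {i j : Bool} (hij : i ≠ j) :
    firstSignalState a b m i j = 0 := by
  refine sum_eq_zero fun g _ => sum_eq_zero fun k _ => encoderState_mul_conj_eq_zero ?_ k
  change zeroCount _ ≠ zeroCount _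
  cases i <;> cases j <;> simp_all [zeroCount_cons]

theorem pow_four_add_pow_four_lt_one {x y : ℝ} (hx : 0 < x) (hy : 0 < y)
    (h : x ^ 2 + y ^ 2 = 1) : x ^ 4 + y ^ 4 < 1 := by
  nlinarith [mul_pos (pow_pos hx 2) (pow_pos hy 2)]

/-- If the encoder keeps a record of the total number of zeroes of `m + 1`
copies of the state `a|0⟩ + b|1⟩`, the reduced state of the first signal becomes diagonal
(`ρ₁ false false = ‖a‖²`, `ρ₁ true true = ‖b‖²`, off-diagonal terms vanish), and its
fidelity with the input state equals `‖a‖⁴ + ‖b‖⁴`, which is strictly less than 1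
whenever `a ≠ 0` and `b ≠ 0`. -/
theorem record_of_zeroes_decoheres (a b : ℂ) (hab : ‖a‖ ^ 2 + ‖b‖ ^ 2 = 1) (m : ℕ) :
    firstSignalState a b m false false = ((‖a‖ ^ 2 : ℝ) : ℂ) ∧
    firstSignalState a b m true true = ((‖b‖ ^ 2 : ℝ) : ℂ) ∧
    firstSignalState a b m false true = 0 ∧
    firstSignalState a b m true false = 0 ∧
    (conj a * firstSignalState a b m false false * a +
     conj a * firstSignalState a b m false true * b +
     conj b * firstSignalState a b m true false * a +
     conj b * firstSignalState a b m true true * b).re = ‖a‖ ^ 4 + ‖b‖ ^ 4 ∧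
    (a ≠ 0 → b ≠ 0 → ‖a‖ ^ 4 + ‖b‖ ^ 4 < 1) := by
  have hnormSq : Complex.normSq a + Complex.normSq b = 1 := by
    simpa only [Complex.normSq_eq_norm_sq] using hab
  have h00 : firstSignalState a b m false false = ((‖a‖ ^ 2 : ℝ) : ℂ) := by
    rw [firstSignalState_diag, hnormSq, one_pow, mul_one, cond_false, Complex.normSq_eq_norm_sq]
  have h11 : firstSignalState a b m true true = ((‖b‖ ^ 2 : ℝ) : ℂ) := by
    rw [firstSignalState_diag, hnormSq, one_pow, mul_one, cond_true, Complex.normSq_eq_norm_sq]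
  have h01 := firstSignalState_offDiag a b m Bool.false_ne_true
  have h10 := firstSignalState_offDiag a b m Bool.false_ne_true.symm
  refine ⟨h00, h11, h01, h10, ?_, fun ha hb => ?_⟩
  · have hfid : conj a * ((‖a‖ ^ 2 : ℝ) : ℂ) * a + conj a * 0 * b + conj b * 0 * a +
        conj b * ((‖b‖ ^ 2 : ℝ) : ℂ) * b = ((‖a‖ ^ 4 + ‖b‖ ^ 4 : ℝ) : ℂ) := by
      push_cast
      linear_combination (‖a‖ : ℂ) ^ 2 * Complex.conj_mul' a + (‖b‖ : ℂ) ^ 2 * Complex.conj_mul' b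
    rw [h00, h11, h01, h10, hfid, Complex.ofReal_re]
  · exact pow_four_add_pow_four_lt_one (norm_pos_iff.2 ha) (norm_pos_iff.2 hb) hab
end
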